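/- Let R be a UFD and I an ideal with R/I ≅ ℤ[x]/(2, x²+1). Then every τ_I-atomic element of R has τ_I-elasticity 1. -/

import Mathlib

/-!
The composite `π : R → R ⧸ I ≃ ℤ[X] ⧸ (2, X² + 1) ↪ 𝔽₂[ε]` (with `X ↦ 1 + ε`) has kernel `I`,
so congruence modulo `I` is equality of residues in `𝔽₂[ε] = {0, 1, ε, 1 + ε}`. Count the
prime factors of an element by their residue. Regrouping prime factors shows that a `τ_I`-atom
`b` has exactly one prime factor of residue `π b`, that `π b ≠ 1`, and that no prime factor of
`b` has a residue of larger `ε`-order than `π b`. So in an atomic `τ_I`-factorization of `a`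
the common residue `c` of the atoms is the residue of largest `ε`-order among the prime factors
of `a`, and the length of the factorization is the number of prime factors of `a` of residue
`c`: both depend on `a` only.
-/

open Polynomial
open scoped ENNReal

variable {R : Type*} [CommRing R]

/-- `a = λ b₁ ⋯ b_k` with `λ` a unit, `k ≥ 1`, and all `bᵢ` pairwise congruent mod `I`. -/
def IsTauFactorization (I : Ideal R) (a : R) (L : List R) : Prop :=
  L ≠ [] ∧ (∃ u : R, IsUnit u ∧ a = u * L.prod) ∧
    ∀ b ∈ L, ∀ c ∈ L, Ideal.Quotient.mk I b = Ideal.Quotient.mk I c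

/-- A `τ_I`-atom: a nonzero nonunit whose only `τ_I`-factorizations have length one. -/
def IsTauAtom (I : Ideal R) (a : R) : Prop :=
  a ≠ 0 ∧ ¬ IsUnit a ∧ ∀ L : List R, IsTauFactorization I a L → L.length = 1

/-- A `τ_I`-factorization into `τ_I`-atoms. -/
def IsTauAtomicFactorization (I : Ideal R) (a : R) (L : List R) : Prop :=
  IsTauFactorization I a L ∧ ∀ b ∈ L, IsTauAtom I b

/-- An element is `τ_I`-atomic if it has a `τ_I`-factorization into `τ_I`-atoms. -/
def IsTauAtomic (I : Ideal R) (a : R) : Prop :=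
  ∃ L : List R, IsTauAtomicFactorization I a L

/-- The `τ_I`-elasticity of an element: `sup{k/l}` over pairs of atomic `τ_I`-factorizations. -/
noncomputable def tauElasticity (I : Ideal R) (a : R) : ℝ≥0∞ :=
  sSup {r : ℝ≥0∞ | ∃ L₁ L₂ : List R, IsTauAtomicFactorization I a L₁ ∧
    IsTauAtomicFactorization I a L₂ ∧
    r = (L₁.length : ℝ≥0∞) / (L₂.length : ℝ≥0∞)}

/-- The `τ_I`-elasticity of the ring: the supremum over `τ_I`-atomic elements. -/
noncomputable def tauRingElasticity (I : Ideal R) : ℝ≥0∞ :=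
  ⨆ a ∈ {a : R | IsTauAtomic I a}, tauElasticity I a

open DualNumber UniqueFactorizationMonoid

instance {A : Type*} [DecidableEq A] : DecidableEq A[ε] := inferInstanceAs (DecidableEq (A × A))
instance {A : Type*} [Fintype A] : Fintype A[ε] := inferInstanceAs (Fintype (A × A))

namespace DualNumber

lemma isUnit_iff_zmod_two {x : (ZMod 2)[ε]} : IsUnit x ↔ x = 1 ∨ x = 1 + ε := by
  rw [TrivSqZeroExt.isUnit_iff_isUnit_fst, isUnit_iff_ne_zero]
  revert x
  decide

lemma eps_mul_of_isUnit {v : (ZMod 2)[ε]} (hv : IsUnit v) : ε * v = ε := by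
  rw [isUnit_iff_zmod_two] at hv
  revert v
  decide

lemma mul_eq_self_of_isUnit {x v : (ZMod 2)[ε]} (hv : IsUnit v) (hx1 : x ≠ 1) (hxv : x ≠ v) :
    x * v = x := by
  rw [isUnit_iff_zmod_two] at hv
  revert x v
  decide

lemma eps_pow_eq_zero_iff {n : ℕ} : (ε : (ZMod 2)[ε]) ^ n = 0 ↔ 2 ≤ n := by
  refine ⟨fun h => ?_, fun h => pow_eq_zero_of_le h (by rw [sq, eps_mul_eps])⟩
  by_contra! hn
  interval_cases n <;> revert h <;> decide

lemma eq_one_of_eps_eq_mul_pow_mul {v w : (ZMod 2)[ε]} {n : ℕ} (hv : IsUnit v) (hw : IsUnit w)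
    (h : ε = v * ε ^ n * w) : n = 1 := by
  rcases n with _ | _ | n
  · rw [pow_zero, mul_one] at h
    exact absurd (h ▸ hv.mul hw) (by rw [isUnit_iff_zmod_two]; decide)
  · rfl
  · rw [eps_pow_eq_zero_iff.mpr (by omega), mul_zero, zero_mul] at h
    exact absurd h (by decide)

/-- The `ε`-adic order, with `0` given order `2` since `ε ^ 2 = 0`. -/
def epsOrder (x : (ZMod 2)[ε]) : ℕ :=
  if x = 0 then 2 else if x = ε then 1 else 0

lemma epsOrder_le_of_dvd {x y : (ZMod 2)[ε]} (h : x ∣ y) : epsOrder x ≤ epsOrder y := by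
  obtain ⟨z, rfl⟩ := h
  revert x z
  decide

lemma eq_of_epsOrder_eq {x y : (ZMod 2)[ε]} (hx : x ≠ 1) (hy : y ≠ 1)
    (h : epsOrder x = epsOrder y) : x = y := by
  revert x y
  decide

end DualNumber

noncomputable def evalOneAddEps : ℤ[X] →+* (ZMod 2)[ε] :=
  eval₂RingHom (Int.castRingHom _) (1 + ε)

lemma two_dvd_of_evalOneAddEps_eq_zero {a b : ℤ} (h : evalOneAddEps (C a * X + C b) = 0) :
    2 ∣ a ∧ 2 ∣ b := by
  simp only [evalOneAddEps, coe_eval₂RingHom, eval₂_add, eval₂_mul, eval₂_X, eval₂_C] at h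
  have ha : (a : ZMod 2) = 0 := by simpa using congrArg TrivSqZeroExt.snd h
  have hb : (b : ZMod 2) = 0 := by simpa [ha] using congrArg TrivSqZeroExt.fst h
  exact ⟨(ZMod.intCast_zmod_eq_zero_iff_dvd a 2).mp ha,
    (ZMod.intCast_zmod_eq_zero_iff_dvd b 2).mp hb⟩

lemma ker_evalOneAddEps : RingHom.ker evalOneAddEps = Ideal.span {2, X ^ 2 + 1} := by
  have hX : evalOneAddEps (X ^ 2 + 1) = 0 := by
    simp only [evalOneAddEps, coe_eval₂RingHom, eval₂_add, eval₂_pow, eval₂_one, eval₂_X]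
    decide
  refine le_antisymm (fun p hker => ?_) (Ideal.span_le.mpr ?_)
  · have hmonic : (X ^ 2 + 1 : ℤ[X]).Monic := by monicity!
    set r := p %ₘ (X ^ 2 + 1)
    have hr : r = C (r.coeff 1) * X + C (r.coeff 0) := by
      have hdeg : (X ^ 2 + 1 : ℤ[X]).natDegree = 2 := by compute_degree!
      refine eq_X_add_C_of_natDegree_le_one (Nat.le_of_lt_succ ?_)
      simpa [hdeg] using natDegree_modByMonic_lt p hmonic (by simp)
    have hp : r + (X ^ 2 + 1) * (p /ₘ (X ^ 2 + 1)) = p := modByMonic_add_div p _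
    obtain ⟨⟨a, ha⟩, ⟨b, hb⟩⟩ :=
      two_dvd_of_evalOneAddEps_eq_zero (a := r.coeff 1) (b := r.coeff 0) (by
        rw [← hr, ← sub_eq_of_eq_add hp.symm]
        simp [RingHom.mem_ker.mp hker, hX])
    rw [Ideal.mem_span_pair, ← hp, hr, ha, hb]
    exact ⟨C a * X + C b, p /ₘ (X ^ 2 + 1), by simp only [C_mul, C_ofNat]; ring⟩
  · rintro q (rfl | rfl)
    · exact RingHom.mem_ker.mpr (by rw [map_ofNat]; decide)
    · exact hX

lemma exists_injective_quotient_to_dualNumber :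
    ∃ g : ℤ[X] ⧸ Ideal.span ({2, X ^ 2 + 1} : Set ℤ[X]) →+* (ZMod 2)[ε], Function.Injective g :=
  ker_evalOneAddEps ▸ ⟨RingHom.kerLift evalOneAddEps, RingHom.kerLift_injective _⟩

section ResidueCount

variable {α M F : Type*} [CommMonoidWithZero α] [CommMonoid M] [FunLike F α M]
  [MonoidHomClass F α M] {π : F} {c : M}

lemma residue_eq_iff_of_associated (hc : ∀ u : αˣ, c * π u = c) {p q : α}
    (h : Associated p q) : π p = c ↔ π q = c := by
  obtain ⟨u, rfl⟩ := h
  rw [map_mul]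
  refine ⟨fun hp => hp ▸ hc u, fun hq => ?_⟩
  rw [← mul_one (π p), ← map_one π, ← u.mul_inv, map_mul, ← mul_assoc, hq, hc]

variable [DecidableEq M]

lemma countP_residue_eq_of_rel (hc : ∀ u : αˣ, c * π u = c) {s t : Multiset α}
    (h : Multiset.Rel Associated s t) : s.countP (π · = c) = t.countP (π · = c) := by
  induction h with
  | zero => rfl
  | cons hpq _ ih =>
    rw [Multiset.countP_cons, Multiset.countP_cons, ih,
      if_congr (residue_eq_iff_of_associated hc hpq) rfl rfl]

variable [UniqueFactorizationMonoid α] {a b : α}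

variable (π c) in
noncomputable def residueCount (a : α) : ℕ :=
  (factors a).countP (π · = c)

variable (π c) in
noncomputable def residueCofactor (a : α) : α :=
  ((factors a).filter (¬π · = c)).prod

lemma residueCount_eq_of_associated (hc : ∀ u : αˣ, c * π u = c) (h : Associated a b) :
    residueCount π c a = residueCount π c b :=
  countP_residue_eq_of_rel hc (factors_rel_of_associated h)

lemma residueCount_mul (hc : ∀ u : αˣ, c * π u = c) (ha : a ≠ 0) (hb : b ≠ 0) :
    residueCount π c (a * b) = residueCount π c a + residueCount π c b := by
  rw [residueCount, countP_residue_eq_of_rel hc (factors_mul ha hb), Multiset.countP_add]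
  rfl

lemma residueCount_list_prod (hc : ∀ u : αˣ, c * π u = c) {L : List α} (hL : L.prod ≠ 0) :
    residueCount π c L.prod = (L.map (residueCount π c)).sum := by
  induction L with
  | nil => rw [List.prod_nil, residueCount, factors_of_isUnit isUnit_one]; rfl
  | cons x L ih =>
    rw [List.prod_cons] at hL ⊢
    rw [residueCount_mul hc (left_ne_zero_of_mul hL) (right_ne_zero_of_mul hL),
      ih (right_ne_zero_of_mul hL), List.map_cons, List.sum_cons]

lemma residueCount_eq_zero_of_not_dvd (h : ¬c ∣ π b) : residueCount π c b = 0 :=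
  Multiset.countP_eq_zero.mpr fun _ hp hpc => h (hpc ▸ map_dvd π (dvd_of_mem_factors hp))

lemma exists_residue_eq_mul_pow (hb : b ≠ 0) :
    ∃ u : αˣ, π b = π u * c ^ residueCount π c b * π (residueCofactor π c b) := by
  obtain ⟨u, hu⟩ := factors_prod hb
  refine ⟨u, ?_⟩
  have hpow : ((factors b).filter (π · = c)).map π = .replicate (residueCount π c b) c := by
    refine Multiset.eq_replicate.mpr ⟨?_, fun x hx => ?_⟩
    · rw [Multiset.card_map, residueCount, Multiset.countP_eq_card_filter]
    · obtain ⟨p, hp, rfl⟩ := Multiset.mem_map.mp hx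
      exact (Multiset.mem_filter.mp hp).2
  conv_lhs => rw [← hu, ← Multiset.prod_filter_mul_prod_filter_not (π · = c), map_mul, map_mul,
    map_multiset_prod π, hpow, Multiset.prod_replicate]
  exact (mul_rotate (π u) _ _).symm

end ResidueCount

section Tau

variable {S : Type*} [CommRing S] {I : Ideal R} {π : R →+* S}

lemma mk_eq_mk_iff_residue_eq (hπ : RingHom.ker π = I) {x y : R} :
    Ideal.Quotient.mk I x = Ideal.Quotient.mk I y ↔ π x = π y := by
  rw [Ideal.Quotient.eq, ← hπ, RingHom.mem_ker, map_sub, sub_eq_zero]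

lemma isTauFactorization_of_residue_eq (hπ : RingHom.ker π = I) {a u : R} {L : List R} {c : S}
    (hL : L ≠ []) (hu : IsUnit u) (ha : a = u * L.prod) (hc : ∀ x ∈ L, π x = c) :
    IsTauFactorization I a L :=
  ⟨hL, ⟨u, hu, ha⟩, fun x hx y hy =>
    (mk_eq_mk_iff_residue_eq hπ).mpr ((hc x hx).trans (hc y hy).symm)⟩

lemma IsTauAtom.length_le_one (hπ : RingHom.ker π = I) {b u : R} (hb : IsTauAtom I b)
    {L : List R} {c : S} (hu : IsUnit u) (h : b = u * L.prod) (hc : ∀ x ∈ L, π x = c) :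
    L.length ≤ 1 := by
  rcases eq_or_ne L [] with rfl | hL
  · exact zero_le_one
  · exact (hb.2.2 L (isTauFactorization_of_residue_eq hπ hL hu h hc)).le

lemma IsTauAtom.residue_ne_of_isUnit (hπ : RingHom.ker π = I) {b w : R} (hb : IsTauAtom I b)
    (hw : IsUnit w) : π b ≠ π w := by
  obtain ⟨w, rfl⟩ := hw
  intro h
  have := hb.length_le_one hπ (u := ↑w⁻¹) (L := [b, ↑w]) (c := π b) w⁻¹.isUnit
    (by simp [mul_left_comm]) (by simp [h])
  simp at this

lemma IsTauAtom.residue_ne_one (hπ : RingHom.ker π = I) {b : R} (hb : IsTauAtom I b) :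
    π b ≠ 1 := by
  simpa using hb.residue_ne_of_isUnit hπ isUnit_one

lemma IsTauAtomicFactorization.residue_eq (hπ : RingHom.ker π = I) {a x y : R} {L : List R}
    (hL : IsTauAtomicFactorization I a L) (hx : x ∈ L) (hy : y ∈ L) : π x = π y :=
  (mk_eq_mk_iff_residue_eq hπ).mp (hL.1.2.2 x hx y hy)

variable [UniqueFactorizationMonoid R] [DecidableEq S] {b : R} {c : S}

/-- Attaching the cofactor to one prime factor of residue `c` regroups `b` into
`residueCount π c b` factors, all of residue `c`. -/
lemma IsTauAtom.residueCount_le_one (hπ : RingHom.ker π = I) (hb : IsTauAtom I b)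
    (hc : c * π (residueCofactor π c b) = c) : residueCount π c b ≤ 1 := by
  by_contra! h2
  obtain ⟨u, hu⟩ := factors_prod hb.1
  set s := (factors b).filter (π · = c)
  have hs : ∀ x ∈ s, π x = c := fun x hx => (Multiset.mem_filter.mp hx).2
  obtain ⟨p, l, hl⟩ := List.exists_cons_of_ne_nil (l := s.toList) (by
    rw [Ne, Multiset.toList_eq_nil]
    intro hempty
    simp [residueCount, Multiset.countP_eq_card_filter, s, hempty] at h2)
  have hlen : (p * residueCofactor π c b :: l).length = residueCount π c b := by
    rw [List.length_cons, ← List.length_cons, ← hl, Multiset.length_toList, residueCount,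
      Multiset.countP_eq_card_filter]
  refine absurd (hb.length_le_one hπ (L := p * residueCofactor π c b :: l) (c := c) u.isUnit ?_ ?_)
    (by omega)
  · have hsp : s.prod = p * l.prod := by rw [← Multiset.prod_toList, hl, List.prod_cons]
    conv_lhs => rw [← hu, ← Multiset.prod_filter_mul_prod_filter_not (π · = c), hsp]
    change p * l.prod * residueCofactor π c b * u = _
    rw [List.prod_cons]
    ring
  · intro x hx
    rcases List.mem_cons.mp hx with rfl | hx
    · rw [map_mul, hs p (by simp [← Multiset.mem_toList, hl]), hc]
    · exact hs x (by simp [← Multiset.mem_toList, hl, hx])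

end Tau

lemma tauElasticity_eq_one {I : Ideal R} {a : R} (ha : IsTauAtomic I a)
    (h : ∀ L₁ L₂ : List R, IsTauAtomicFactorization I a L₁ →
      IsTauAtomicFactorization I a L₂ → L₁.length = L₂.length) :
    tauElasticity I a = 1 := by
  obtain ⟨L, hL⟩ := ha
  refine le_antisymm (sSup_le ?_) (le_sSup ⟨L, L, hL, hL, ?_⟩)
  · rintro r ⟨L₁, L₂, h₁, h₂, rfl⟩
    rw [h L₁ L₂ h₁ h₂]
    exact ENNReal.div_self_le_one
  · refine (ENNReal.div_self ?_ (ENNReal.natCast_ne_top _)).symm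
    exact Nat.cast_ne_zero.mpr (List.length_pos_iff.mpr hL.1.1).ne'

section ResidueDualNumber

variable {I : Ideal R} {π : R →+* (ZMod 2)[ε]} {a b x : R} {L : List R}

lemma IsTauAtom.residue_mul_unit (hπ : RingHom.ker π = I) (hb : IsTauAtom I b) (u : Rˣ) :
    π b * π u = π b :=
  mul_eq_self_of_isUnit (u.isUnit.map π) (hb.residue_ne_one hπ)
    (hb.residue_ne_of_isUnit hπ u.isUnit)

variable [UniqueFactorizationMonoid R]

lemma residueCount_eq_zero_of_epsOrder_lt {d : (ZMod 2)[ε]} (h : epsOrder (π b) < epsOrder d) :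
    residueCount π d b = 0 :=
  residueCount_eq_zero_of_not_dvd fun hd => (epsOrder_le_of_dvd hd).not_gt h

lemma isUnit_residue_residueCofactor_eps (h : residueCount π 0 b = 0) :
    IsUnit (π (residueCofactor π ε b)) := by
  rw [residueCofactor, map_multiset_prod]
  refine Multiset.prod_induction _ _ (fun _ _ => IsUnit.mul) isUnit_one fun y hy => ?_
  obtain ⟨p, hp, rfl⟩ := Multiset.mem_map.mp hy
  have h0 : π p ≠ 0 := Multiset.countP_eq_zero.mp h p (Multiset.mem_of_mem_filter hp)
  have hε : π p ≠ ε := (Multiset.mem_filter.mp hp).2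
  rw [isUnit_iff_zmod_two]
  revert h0 hε
  generalize π p = z
  revert z
  decide

lemma residueCount_eps_eq_one (hb : b ≠ 0) (hε : π b = ε) : residueCount π ε b = 1 := by
  obtain ⟨u, hu⟩ := exists_residue_eq_mul_pow (π := π) (c := ε) hb
  have h0 : residueCount π 0 b = 0 := residueCount_eq_zero_of_epsOrder_lt (by rw [hε]; decide)
  exact eq_one_of_eps_eq_mul_pow_mul (u.isUnit.map π) (isUnit_residue_residueCofactor_eps h0)
    (hε ▸ hu)

/-- Without a prime factor of residue `0`, the residue `0 = π b` needs two prime factors of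
residue `ε`, and those regroup. -/
lemma IsTauAtom.residueCount_zero_eq_one (hπ : RingHom.ker π = I) (hb : IsTauAtom I b)
    (h0 : π b = 0) : residueCount π 0 b = 1 := by
  refine le_antisymm (hb.residueCount_le_one hπ (zero_mul _))
    (Nat.one_le_iff_ne_zero.mpr fun hz => ?_)
  have hw := isUnit_residue_residueCofactor_eps hz
  obtain ⟨u, hu⟩ := exists_residue_eq_mul_pow (π := π) (c := ε) hb.1
  rw [h0, eq_comm, hw.mul_left_eq_zero, (u.isUnit.map π).mul_right_eq_zero,
    eps_pow_eq_zero_iff] at hu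
  have := hb.residueCount_le_one hπ (eps_mul_of_isUnit hw)
  omega

lemma IsTauAtom.residueCount_one_add_eps_eq_one (hπ : RingHom.ker π = I) (hb : IsTauAtom I b)
    (h : π b = 1 + ε) : residueCount π (1 + ε) b = 1 := by
  have hw : π (residueCofactor π (1 + ε) b) = 1 := by
    rw [residueCofactor, map_multiset_prod]
    refine Multiset.prod_eq_one fun y hy => ?_
    obtain ⟨p, hp, rfl⟩ := Multiset.mem_map.mp hy
    have hunit : IsUnit (π p) := isUnit_of_dvd_unit
      (map_dvd π (dvd_of_mem_factors (Multiset.mem_of_mem_filter hp)))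
      (h ▸ isUnit_iff_zmod_two.mpr (Or.inr rfl))
    have hne : π p ≠ 1 + ε := (Multiset.mem_filter.mp hp).2
    exact (isUnit_iff_zmod_two.mp hunit).resolve_right hne
  obtain ⟨u, hu⟩ := exists_residue_eq_mul_pow (π := π) (c := 1 + ε) hb.1
  refine le_antisymm (hb.residueCount_le_one hπ (by rw [hw, mul_one]))
    (Nat.one_le_iff_ne_zero.mpr fun hz => hb.residue_ne_of_isUnit hπ u.isUnit ?_)
  rw [hu, hz, hw, pow_zero, mul_one, mul_one]

lemma IsTauAtom.residueCount_residue_eq_one (hπ : RingHom.ker π = I) (hb : IsTauAtom I b) :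
    residueCount π (π b) b = 1 := by
  have h1 := hb.residue_ne_one hπ
  obtain h | h | h : π b = 0 ∨ π b = ε ∨ π b = 1 + ε := by
    revert h1
    generalize π b = z
    revert z
    decide
  · rw [h]; exact hb.residueCount_zero_eq_one hπ h
  · rw [h]; exact residueCount_eps_eq_one hb.1 h
  · rw [h]; exact hb.residueCount_one_add_eps_eq_one hπ h

variable [IsDomain R]

lemma IsTauAtomicFactorization.residueCount_eq_sum (hL : IsTauAtomicFactorization I a L)
    {d : (ZMod 2)[ε]} (hd : ∀ u : Rˣ, d * π u = d) :
    residueCount π d a = (L.map (residueCount π d)).sum := by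
  obtain ⟨⟨-, ⟨u, hu, rfl⟩, -⟩, hatoms⟩ := hL
  rw [residueCount_eq_of_associated hd (associated_unit_mul_left _ _ hu),
    residueCount_list_prod hd (List.prod_ne_zero fun h0 => (hatoms 0 h0).1 rfl)]

lemma IsTauAtomicFactorization.length_eq_residueCount (hπ : RingHom.ker π = I)
    (hL : IsTauAtomicFactorization I a L) (hx : x ∈ L) : L.length = residueCount π (π x) a := by
  rw [hL.residueCount_eq_sum ((hL.2 x hx).residue_mul_unit hπ),
    List.map_congr_left (g := fun _ => 1), List.map_const', List.sum_replicate, smul_eq_mul,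
    mul_one]
  intro y hy
  rw [hL.residue_eq hπ hx hy, (hL.2 y hy).residueCount_residue_eq_one hπ]

lemma IsTauAtomicFactorization.residueCount_eq_zero (hπ : RingHom.ker π = I)
    (hL : IsTauAtomicFactorization I a L) (hx : x ∈ L) {d : (ZMod 2)[ε]}
    (hd : ∀ u : Rˣ, d * π u = d) (h : epsOrder (π x) < epsOrder d) : residueCount π d a = 0 := by
  rw [hL.residueCount_eq_sum hd]
  refine List.sum_eq_zero fun n hn => ?_
  obtain ⟨y, hy, rfl⟩ := List.mem_map.mp hn
  exact residueCount_eq_zero_of_epsOrder_lt (hL.residue_eq hπ hx hy ▸ h)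

lemma IsTauAtomicFactorization.epsOrder_residue_le (hπ : RingHom.ker π = I) {L' : List R}
    {x' : R} (hL : IsTauAtomicFactorization I a L) (hL' : IsTauAtomicFactorization I a L')
    (hx : x ∈ L) (hx' : x' ∈ L') : epsOrder (π x') ≤ epsOrder (π x) := by
  by_contra! hlt
  have := hL.residueCount_eq_zero hπ hx ((hL'.2 x' hx').residue_mul_unit hπ) hlt
  rw [← hL'.length_eq_residueCount hπ hx'] at this
  exact hL'.1.1 (List.length_eq_zero_iff.mp this)

theorem IsTauAtomicFactorization.length_eq (hπ : RingHom.ker π = I) {L' : List R}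
    (hL : IsTauAtomicFactorization I a L) (hL' : IsTauAtomicFactorization I a L') :
    L.length = L'.length := by
  obtain ⟨x, hx⟩ := List.exists_mem_of_ne_nil _ hL.1.1
  obtain ⟨x', hx'⟩ := List.exists_mem_of_ne_nil _ hL'.1.1
  have hres : π x = π x' := eq_of_epsOrder_eq ((hL.2 x hx).residue_ne_one hπ)
    ((hL'.2 x' hx').residue_ne_one hπ)
    ((hL'.epsOrder_residue_le hπ hL hx' hx).antisymm (hL.epsOrder_residue_le hπ hL' hx hx'))
  rw [hL.length_eq_residueCount hπ hx, hL'.length_eq_residueCount hπ hx', hres]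

end ResidueDualNumber

/-- UFD `R`, `R/I ≅ ℤ[x]/(2, x²+1)`: every `τ_I`-atomic element has `τ_I`-elasticity `1`. -/
theorem stmt_11 {R : Type*} [CommRing R] [IsDomain R] [UniqueFactorizationMonoid R]
    (I : Ideal R)
    (f : (R ⧸ I) ≃+* (ℤ[X] ⧸ Ideal.span ({2, X ^ 2 + 1} : Set ℤ[X])))
    (a : R) (ha : IsTauAtomic I a) :
    tauElasticity I a = 1 ∧
    ∀ L₁ L₂ : List R, IsTauAtomicFactorization I a L₁ →
      IsTauAtomicFactorization I a L₂ → L₁.length = L₂.length := by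
  obtain ⟨g, hg⟩ := exists_injective_quotient_to_dualNumber
  have hπ : RingHom.ker ((g.comp f.toRingHom).comp (Ideal.Quotient.mk I)) = I := by
    rw [RingHom.ker_comp_of_injective (Ideal.Quotient.mk I) (f := g.comp f.toRingHom)
      (hg.comp f.injective), Ideal.mk_ker]
  have hlen : ∀ L₁ L₂ : List R, IsTauAtomicFactorization I a L₁ →
      IsTauAtomicFactorization I a L₂ → L₁.length = L₂.length :=
    fun _ _ h₁ h₂ => h₁.length_eq hπ h₂
  exact ⟨tauElasticity_eq_one ha hlen, hlen⟩
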